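/- Let H be a finite simple graph that is a non-bipartite projective core, let a, b, c be three distinct vertices of H, and let t ≥ 1 be an integer. Then there exist a finite simple graph F, a set V' ⊆ V(F), a map h' : V' → V(H), and a set R ⊆ V(F) with |R| = t such that: (i) every homomorphism h : F → H with h|_{V'} = h' satisfies h(u) ∈ {a,b,c} for all u ∈ R, and h(v) = a for at least one v ∈ R; and (ii) for every v ∈ R there exists a homomorphism h : F → H with h|_{V'} = h', h(v) = a, and h(u) ∈ {b,c} for all u ∈ R with u ≠ v. -/

import Mathlib

/-!
Take `F = H^(t+1)` with the diagonal pinned to the identity of `H`. By projectivity the pinned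
homomorphisms `F → H` are exactly the projections. Let `R` consist of the `t` tuples `e_i` that
are `a` in coordinates `i` and `t` and `b` elsewhere. Every projection maps `R` into `{a, b}`
and sends some `e_i` to `a`, and the projection onto coordinate `i < t` sends `e_i` to `a` and
every other `e_j` to `b`.
-/

/-- The `ℓ`-fold direct (tensor) power of a simple graph `H`: two tuples are
adjacent iff they are adjacent in every coordinate (for `ℓ ≥ 1` the inequality
condition is automatic and only serves to keep the graph loopless). -/
def tensorPow {V : Type} (H : SimpleGraph V) (ℓ : ℕ) :
    SimpleGraph (Fin ℓ → V) where
  Adj x y := x ≠ y ∧ ∀ i, H.Adj (x i) (y i)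
  symm := ⟨fun _ _ h => ⟨h.1.symm, fun i => (h.2 i).symm⟩⟩
  loopless := ⟨fun _ h => h.1 rfl⟩

/-- A simple graph `H` is projective if for every `ℓ ≥ 2`, every idempotent
homomorphism `f : H^ℓ → H` is a projection onto one of the coordinates. -/
def Projective {V : Type} (H : SimpleGraph V) : Prop :=
  ∀ ℓ : ℕ, 2 ≤ ℓ → ∀ f : tensorPow H ℓ →g H,
    (∀ x : V, f (fun _ => x) = x) → ∃ i : Fin ℓ, ∀ z : Fin ℓ → V, f z = z i

def tensorPow.proj {V : Type} (H : SimpleGraph V) {ℓ : ℕ} (j : Fin ℓ) :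
    tensorPow H ℓ →g H where
  toFun z := z j
  map_rel' h := h.2 j

section OrVertex

variable {V : Type} (a b : V) {t : ℕ}

def orVertex (i : Fin t) : Fin (t + 1) → V :=
  fun j => if j = i.castSucc ∨ j = Fin.last t then a else b

lemma orVertex_castSucc_self (i : Fin t) : orVertex a b i i.castSucc = a :=
  if_pos (Or.inl rfl)

lemma orVertex_last (i : Fin t) : orVertex a b i (Fin.last t) = a :=
  if_pos (Or.inr rfl)

lemma orVertex_castSucc_of_ne {i j : Fin t} (hji : j ≠ i) : orVertex a b i j.castSucc = b :=
  if_neg (by simp [hji, Fin.castSucc_ne_last])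

lemma orVertex_eq_or (i : Fin t) (j : Fin (t + 1)) :
    orVertex a b i j = a ∨ orVertex a b i j = b := by
  unfold orVertex
  split_ifs <;> simp

variable {a b}

lemma orVertex_injective (hab : a ≠ b) : Function.Injective (orVertex a b (t := t)) := by
  intro i j hij
  by_contra hne
  have hi := congrFun hij i.castSucc
  rw [orVertex_castSucc_self, orVertex_castSucc_of_ne a b hne] at hi
  exact hab hi

end OrVertex

theorem stmt_4_general {V : Type} [Fintype V] (H : SimpleGraph V)
    (hproj : Projective H)
    (a b c : V) (hab : a ≠ b)
    (t : ℕ) (ht : 1 ≤ t) :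
    ∃ (VF : Type) (_ : Fintype VF) (F : SimpleGraph VF) (V' : Set VF)
      (h' : V' → V) (R : Set VF), R.ncard = t ∧
      (∀ h : F →g H,
        (∀ (v : VF) (hv : v ∈ V'), h v = h' ⟨v, hv⟩) →
        (∀ u ∈ R, h u ∈ ({a, b, c} : Set V)) ∧ (∃ v ∈ R, h v = a)) ∧
      (∀ v ∈ R, ∃ h : F →g H,
        (∀ (x : VF) (hx : x ∈ V'), h x = h' ⟨x, hx⟩) ∧
        h v = a ∧ ∀ u ∈ R, u ≠ v → h u ∈ ({b, c} : Set V)) := by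
  refine ⟨Fin (t + 1) → V, inferInstance, tensorPow H (t + 1), Set.range (Function.const _),
    fun p => p.1 (Fin.last t), Set.range (orVertex a b), ?_, ?_, ?_⟩
  · rw [Set.ncard_range_of_injective (orVertex_injective hab), Nat.card_eq_fintype_card,
      Fintype.card_fin]
  · intro h hpin
    obtain ⟨j, hj⟩ := hproj (t + 1) (by omega) h fun x => hpin _ ⟨x, rfl⟩
    refine ⟨?_, ?_⟩
    · rintro _ ⟨i, rfl⟩
      rw [hj]
      rcases orVertex_eq_or a b i j with hi | hi <;> simp [hi]
    · induction j using Fin.lastCases with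
      | last => exact ⟨_, ⟨⟨0, ht⟩, rfl⟩, by rw [hj, orVertex_last]⟩
      | cast i => exact ⟨_, ⟨i, rfl⟩, by rw [hj, orVertex_castSucc_self]⟩
  · rintro _ ⟨i, rfl⟩
    refine ⟨tensorPow.proj H i.castSucc, ?_, orVertex_castSucc_self a b i, ?_⟩
    · rintro _ ⟨x, rfl⟩
      rfl
    · rintro _ ⟨j, rfl⟩ hji
      have hji : i ≠ j := fun h => hji (h ▸ rfl)
      simp [tensorPow.proj, orVertex_castSucc_of_ne a b hji]

/-- Existence of `t`-or-gadgets for a non-bipartite projective core `H`. -/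
theorem stmt_4 {V : Type} [Fintype V] (H : SimpleGraph V)
    (hcore : ∀ f : H →g H, Function.Injective f)
    (hnonbip : ¬ H.Colorable 2)
    (hproj : Projective H)
    (a b c : V) (hab : a ≠ b) (hac : a ≠ c) (hbc : b ≠ c)
    (t : ℕ) (ht : 1 ≤ t) :
    ∃ (VF : Type) (_ : Fintype VF) (F : SimpleGraph VF) (V' : Set VF)
      (h' : V' → V) (R : Set VF), R.ncard = t ∧
      (∀ h : F →g H,
        (∀ (v : VF) (hv : v ∈ V'), h v = h' ⟨v, hv⟩) →
        (∀ u ∈ R, h u ∈ ({a, b, c} : Set V)) ∧ (∃ v ∈ R, h v = a)) ∧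
      (∀ v ∈ R, ∃ h : F →g H,
        (∀ (x : VF) (hx : x ∈ V'), h x = h' ⟨x, hx⟩) ∧
        h v = a ∧ ∀ u ∈ R, u ≠ v → h u ∈ ({b, c} : Set V)) :=
  stmt_4_general H hproj a b c hab t ht
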